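/- arXiv:0907.0918 — 3 statements merged into one kernel-verified Lean document; each statement's English description precedes it below -/
import Mathlib

section
/- For every positive integer n, (1/n) * Σ_{k=1}^{n} gcd(n, k) = ∏_{p | n, p prime} (1 + (1 - 1/p) * ord_p(n)), where ord_p(n) is the p-adic valuation of n. -/
/-!
Writing `gcd n k = ∑_{d ∣ gcd n k} φ d` and counting the `k ≤ n` divisible by a given `d ∣ n` gives
Pillai's identity `∑_{k ≤ n} gcd n k = ∑_{d ∣ n} φ d · n / d`. Hence the mean of `gcd n k` is
`∑_{d ∣ n} φ d / d`, the divisor sum of a multiplicative function, so it factors over the prime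
powers `p ^ a ∥ n`, where it equals `1 + a (1 - 1/p)` because `φ (p ^ i) / p ^ i = 1 - 1/p` for `i ≥ 1`.
-/

open Finset Nat ArithmeticFunction
open scoped ArithmeticFunction.zeta

theorem Nat.gcd_eq_sum_totient_filter_divisors {n : ℕ} (hn : n ≠ 0) (k : ℕ) :
    n.gcd k = ∑ d ∈ n.divisors with d ∣ k, φ d := by
  have : {d ∈ n.divisors | d ∣ k} = (n.gcd k).divisors := by
    ext d
    simp [Nat.dvd_gcd_iff, hn]
  rw [this, sum_totient]

theorem Nat.sum_Icc_gcd (n : ℕ) : ∑ k ∈ Icc 1 n, n.gcd k = ∑ d ∈ n.divisors, φ d * (n / d) :=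
  calc ∑ k ∈ Icc 1 n, n.gcd k
      = ∑ k ∈ Icc 1 n, ∑ d ∈ n.divisors, if d ∣ k then φ d else 0 :=
        sum_congr rfl fun k hk => by
          rw [← sum_filter, gcd_eq_sum_totient_filter_divisors (by grind)]
    _ = ∑ d ∈ n.divisors, ∑ k ∈ Icc 1 n, if d ∣ k then φ d else 0 := sum_comm
    _ = ∑ d ∈ n.divisors, φ d * (n / d) :=
        sum_congr rfl fun d _ => by
          rw [← sum_filter, sum_const, smul_eq_mul, ← Ioc_filter_dvd_card_eq_div, mul_comm,
            ← Icc_add_one_left_eq_Ioc, zero_add]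

namespace ArithmeticFunction

variable {K : Type*} [Field K]

noncomputable def totientDivId : ArithmeticFunction K :=
  ⟨fun d => (φ d : K) / d, by simp⟩

theorem totientDivId_apply (d : ℕ) : (totientDivId d : K) = φ d / d := rfl

theorem isMultiplicative_totientDivId : (totientDivId : ArithmeticFunction K).IsMultiplicative := by
  refine ⟨by simp [totientDivId_apply], fun {m n} hmn => ?_⟩
  simp only [totientDivId_apply, totient_mul hmn, cast_mul, mul_div_mul_comm]

theorem sum_divisors_prime_pow_totientDivId [CharZero K] {p : ℕ} (hp : p.Prime) (a : ℕ) :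
    ∑ d ∈ (p ^ a).divisors, (totientDivId d : K) = 1 + (1 - 1 / (p : K)) * a := by
  have hp0 : (p : K) ≠ 0 := cast_ne_zero.mpr hp.ne_zero
  have hpow : ∀ i, (totientDivId (p ^ (i + 1)) : K) = 1 - 1 / p := fun i => by
    rw [totientDivId_apply, totient_prime_pow_succ hp]
    push_cast [cast_sub hp.one_le]
    field_simp
    ring
  rw [sum_divisors_prime_pow hp, sum_range_succ', sum_congr rfl fun i _ => hpow i, sum_const,
    card_range, nsmul_eq_mul, pow_zero, totientDivId_apply]
  simp only [totient_one, cast_one, div_one]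
  ring

theorem sum_divisors_totientDivId_eq_prod [CharZero K] {n : ℕ} (hn : n ≠ 0) :
    ∑ d ∈ n.divisors, (totientDivId d : K) =
      ∏ p ∈ n.primeFactors, (1 + (1 - 1 / (p : K)) * n.factorization p) := by
  rw [← coe_mul_zeta_apply,
    (isMultiplicative_totientDivId.mul isMultiplicative_zeta.natCast).multiplicative_factorization _ hn,
    prod_factorization_eq_prod_primeFactors]
  exact prod_congr rfl fun p hp => by
    rw [coe_mul_zeta_apply, sum_divisors_prime_pow_totientDivId (prime_of_mem_primeFactors hp)]

end ArithmeticFunction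

theorem Nat.inv_mul_sum_Icc_gcd {K : Type*} [Field K] [CharZero K] {n : ℕ} (hn : n ≠ 0) :
    (n : K)⁻¹ * ∑ k ∈ Icc 1 n, (n.gcd k : K) = ∑ d ∈ n.divisors, (totientDivId d : K) := by
  rw [← cast_sum, sum_Icc_gcd, cast_sum, mul_sum]
  refine sum_congr rfl fun d hd => ?_
  have hd0 : (d : K) ≠ 0 := cast_ne_zero.mpr (pos_of_mem_divisors hd).ne'
  rw [totientDivId_apply, cast_mul, cast_div_charZero (dvd_of_mem_divisors hd)]
  field_simp

theorem stmt_0 (n : ℕ) (hn : 0 < n) :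
    (1 / (n : ℚ)) * ∑ k ∈ Finset.Icc 1 n, (Nat.gcd n k : ℚ) =
      ∏ p ∈ n.primeFactors, (1 + (1 - 1 / (p : ℚ)) * (n.factorization p : ℚ)) := by
  rw [one_div, inv_mul_sum_Icc_gcd hn.ne', sum_divisors_totientDivId_eq_prod hn.ne']
end

section
/- For a finite abelian group A = ∏_{j=1}^{k} ℤ/n_jℤ, (1/|A|) * Σ_{l=1}^{|A|} ∏_{j=1}^{k} gcd(l, n_j) = Σ_{a ∈ A} 1/|a|, where |a| denotes the order of the element a in A. -/
/-! Double count the pairs `(l, a)` with `1 ≤ l ≤ |A|` and `|a| ∣ l`. For fixed `l` these are the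
`l`-torsion elements of `A`, and the `l`-torsion of `ℤ/nℤ` has `gcd(l, n)` elements. For fixed `a`
there are `|A| / |a|` of them, because `|a|` divides `|A|`. -/

open Finset

theorem sum_Icc_card_nsmul_eq_zero_eq_sum_div {A : Type*} [AddMonoid A] [Fintype A]
    [DecidableEq A] (N : ℕ) :
    ∑ l ∈ Icc 1 N, #{a : A | l • a = 0} = ∑ a : A, N / addOrderOf a := by
  calc ∑ l ∈ Icc 1 N, #{a : A | l • a = 0}
      = ∑ l ∈ Icc 1 N, #{a : A | addOrderOf a ∣ l} := by
        simp_rw [addOrderOf_dvd_iff_nsmul_eq_zero]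
    _ = ∑ a : A, #{l ∈ Ioc 0 N | addOrderOf a ∣ l} :=
        sum_card_bipartiteAbove_eq_sum_card_bipartiteBelow _
    _ = ∑ a : A, N / addOrderOf a := by
        simp only [Nat.Ioc_filter_dvd_card_eq_div]

theorem sum_Icc_card_nsmul_eq_zero {A : Type*} [AddMonoid A] [Fintype A] [DecidableEq A] {N : ℕ}
    (hN : AddMonoid.exponent A ∣ N) :
    (∑ l ∈ Icc 1 N, #{a : A | l • a = 0} : ℚ) = N * ∑ a : A, 1 / (addOrderOf a : ℚ) := by
  rw [← Nat.cast_sum, sum_Icc_card_nsmul_eq_zero_eq_sum_div, Nat.cast_sum, mul_sum]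
  refine sum_congr rfl fun a _ => ?_
  rw [Nat.cast_div_charZero ((AddMonoid.addOrder_dvd_exponent a).trans hN), mul_one_div]

theorem card_nsmul_eq_zero_pi {ι : Type*} [Fintype ι] [DecidableEq ι] {G : ι → Type*}
    [∀ i, AddMonoid (G i)] [∀ i, Fintype (G i)] [∀ i, DecidableEq (G i)] (l : ℕ) :
    #{a : ∀ i, G i | l • a = 0} = ∏ i, #{x : G i | l • x = 0} := by
  simp only [← Fintype.card_subtype]
  rw [← Fintype.card_pi]
  exact Fintype.card_congr ((Equiv.subtypeEquivRight fun _ => funext_iff).trans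
    (Equiv.subtypePiEquivPi (p := fun _ x => l • x = 0)))

theorem ZMod.card_nsmul_eq_zero (n : ℕ) [NeZero n] (l : ℕ) :
    #{x : ZMod n | l • x = 0} = Nat.gcd l n := by
  have hker := IsAddCyclic.card_nsmulAddMonoidHom_ker (ZMod n) l
  rw [Nat.card_zmod, Nat.gcd_comm] at hker
  rw [← Fintype.card_subtype, ← Nat.card_eq_fintype_card, ← hker]
  rfl

theorem stmt_4_general (k : ℕ) (n : Fin k → ℕ) [∀ j, NeZero (n j)] :
    (1 / ((∏ j, n j : ℕ) : ℚ)) *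
        ∑ l ∈ Finset.Icc 1 (∏ j, n j), ∏ j, (Nat.gcd l (n j) : ℚ) =
      ∑ a : (∀ j, ZMod (n j)), 1 / (addOrderOf a : ℚ) := by
  have hcard : Fintype.card (∀ j, ZMod (n j)) = ∏ j, n j := by
    simp only [Fintype.card_pi, ZMod.card]
  have htorsion (l : ℕ) : #{a : ∀ j, ZMod (n j) | l • a = 0} = ∏ j, Nat.gcd l (n j) :=
    (card_nsmul_eq_zero_pi l).trans (prod_congr rfl fun j _ => ZMod.card_nsmul_eq_zero (n j) l)
  simp_rw [← Nat.cast_prod, ← htorsion]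
  rw [sum_Icc_card_nsmul_eq_zero (hcard ▸ AddGroup.exponent_dvd_card), ← mul_assoc,
    one_div_mul_cancel (Nat.cast_ne_zero.mpr (hcard ▸ Fintype.card_ne_zero)), one_mul]

theorem stmt_4 (k : ℕ) (n : Fin k → ℕ) (hn : ∀ j, 0 < n j) [∀ j, NeZero (n j)] :
    (1 / ((∏ j, n j : ℕ) : ℚ)) *
        ∑ l ∈ Finset.Icc 1 (∏ j, n j), ∏ j, (Nat.gcd l (n j) : ℚ) =
      ∑ a : (∀ j, ZMod (n j)), 1 / (addOrderOf a : ℚ) :=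
  stmt_4_general k n
end

section
/- Let n₁, ..., n_k be positive integers and L = lcm(n₁, ..., n_k), and let w be a natural number. Then (1/L) Σ_{l=1}^{L} (∏_{j=1}^{k} gcd(l, n_j))^w = ∏_{p | L, p prime} (1/p^{ν_{p,k}}) Σ_{l=1}^{p^{ν_{p,k}}} (∏_{j=1}^{k} gcd(l, p^{ord_p(n_j)}))^w, where ν_{p,k} = max_j ord_p(n_j). -/
/-!
For each `m`, the summand `l ↦ (∏ j, gcd(l, gcd(m, n j)))^w` has period `m`, and for
coprime `x, y` the summand for `x * y` is the product of those for `x` and `y`. By the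
Chinese remainder theorem the average over `l` modulo `x * y` of a product of an
`x`-periodic and a `y`-periodic function is the product of their averages, so
`m ↦ (1/m) ∑_{l ≤ m} (∏ j, gcd(l, gcd(m, n j)))^w` is multiplicative. At `m = L` it is
the left-hand side, and at `p ^ ν_p` it is the `p`-factor.
-/

open Finset Function

theorem Function.Periodic.sum_Icc_one_eq_sum_range {M : Type*} [AddCommMonoid M] {f : ℕ → M}
    {m : ℕ} (hf : Periodic f m) : ∑ l ∈ Icc 1 m, f l = ∑ l ∈ range m, f l := by
  rw [← Ico_add_one_right_eq_Icc, sum_Ico_eq_sum_range, Nat.add_sub_cancel]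
  rcases m with _ | m
  · simp
  rw [sum_range_succ, sum_range_succ' f, add_comm 1 m, hf.eq]
  simp only [add_comm 1]

theorem ZMod.sum_val_eq_sum_range {M : Type*} [AddCommMonoid M] (f : ℕ → M) (m : ℕ)
    [NeZero m] :
    ∑ x : ZMod m, f x.val = ∑ l ∈ range m, f l := by
  obtain ⟨m, rfl⟩ := Nat.exists_eq_succ_of_ne_zero (NeZero.ne m)
  exact Fin.sum_univ_eq_sum_range f (m + 1)

theorem Function.Periodic.sum_range_mul_of_coprime {R : Type*} [CommSemiring R] {f g : ℕ → R}
    {m m' : ℕ} (hf : Periodic f m) (hg : Periodic g m') (hmm' : m.Coprime m') :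
    ∑ l ∈ range (m * m'), f l * g l = (∑ l ∈ range m, f l) * ∑ l ∈ range m', g l := by
  rcases eq_or_ne m 0 with rfl | hm
  · simp
  rcases eq_or_ne m' 0 with rfl | hm'
  · simp
  have : NeZero m := ⟨hm⟩
  have : NeZero m' := ⟨hm'⟩
  have : NeZero (m * m') := ⟨mul_ne_zero hm hm'⟩
  have hcrt : ∀ x : ZMod (m * m'), f x.val * g x.val =
      f (ZMod.chineseRemainder hmm' x).1.val * g (ZMod.chineseRemainder hmm' x).2.val := by
    intro x
    rw [show ZMod.chineseRemainder hmm' x = ((x.val : ℕ) : ZMod m × ZMod m') from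
      (ZMod.natCast_val x).symm, Prod.fst_natCast, Prod.snd_natCast, ZMod.val_natCast,
      ZMod.val_natCast, hf.map_mod_nat, hg.map_mod_nat]
  simp_rw [← ZMod.sum_val_eq_sum_range, hcrt, sum_mul_sum, ← Fintype.sum_prod_type']
  exact Fintype.sum_equiv (ZMod.chineseRemainder hmm').toEquiv _ _ fun _ => rfl

theorem Function.Periodic.sum_Icc_one_mul_of_coprime {R : Type*} [CommSemiring R] {f g : ℕ → R}
    {m m' : ℕ} (hf : Periodic f m) (hg : Periodic g m') (hmm' : m.Coprime m') :
    ∑ l ∈ Icc 1 (m * m'), f l * g l = (∑ l ∈ Icc 1 m, f l) * ∑ l ∈ Icc 1 m', g l := by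
  have hf' : Periodic f (m * m') := by simpa [mul_comm] using hf.nat_mul m'
  have hg' : Periodic g (m * m') := by simpa using hg.nat_mul m
  have hfg : Periodic (fun l => f l * g l) (m * m') := hf'.mul hg'
  rw [hfg.sum_Icc_one_eq_sum_range, hf.sum_Icc_one_eq_sum_range, hg.sum_Icc_one_eq_sum_range,
    hf.sum_range_mul_of_coprime hg hmm']

theorem Nat.gcd_gcd_mul_of_coprime {x y : ℕ} (hxy : x.Coprime y) (l a : ℕ) :
    Nat.gcd l (Nat.gcd (x * y) a) = Nat.gcd l (Nat.gcd x a) * Nat.gcd l (Nat.gcd y a) := by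
  rw [Nat.gcd_comm (x * y), Nat.Coprime.gcd_mul a hxy, Nat.Coprime.gcd_mul l (hxy.gcd_both a a),
    Nat.gcd_comm a x, Nat.gcd_comm a y]

theorem Nat.gcd_prime_pow_of_factorization_le {p a ν : ℕ} (hp : p.Prime) (ha : a ≠ 0)
    (h : a.factorization p ≤ ν) : Nat.gcd (p ^ ν) a = p ^ a.factorization p := by
  refine Nat.dvd_antisymm ?_ (Nat.dvd_gcd (pow_dvd_pow p h) (Nat.ordProj_dvd a p))
  obtain ⟨i, -, hi⟩ := (Nat.dvd_prime_pow hp).mp (Nat.gcd_dvd_left (p ^ ν) a)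
  rw [hi]
  exact pow_dvd_pow p ((hp.pow_dvd_iff_le_factorization ha).mp (hi ▸ Nat.gcd_dvd_right _ _))

section GcdProductMean

variable {ι : Type*} [Fintype ι] (n : ι → ℕ) (w : ℕ)

def gcdProductMean (m : ℕ) : ℚ :=
  (1 / m) * ∑ l ∈ Icc 1 m, (∏ j, (Nat.gcd l (Nat.gcd m (n j)) : ℚ)) ^ w

theorem periodic_gcdProduct (m : ℕ) :
    Periodic (fun l => (∏ j, (Nat.gcd l (Nat.gcd m (n j)) : ℚ)) ^ w) m := by
  intro l
  simp only [Nat.gcd_add_right_left_of_dvd l (Nat.gcd_dvd_left m _)]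

theorem gcdProductMean_one : gcdProductMean n w 1 = 1 := by
  simp [gcdProductMean]

theorem gcdProductMean_mul {x y : ℕ} (hxy : x.Coprime y) :
    gcdProductMean n w (x * y) = gcdProductMean n w x * gcdProductMean n w y := by
  have hsplit : ∀ l, (∏ j, (Nat.gcd l (Nat.gcd (x * y) (n j)) : ℚ)) ^ w =
      (∏ j, (Nat.gcd l (Nat.gcd x (n j)) : ℚ)) ^ w *
        (∏ j, (Nat.gcd l (Nat.gcd y (n j)) : ℚ)) ^ w := by
    intro l
    simp only [Nat.gcd_gcd_mul_of_coprime hxy, Nat.cast_mul, prod_mul_distrib, mul_pow]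
  rw [gcdProductMean, gcdProductMean, gcdProductMean, sum_congr rfl fun l _ => hsplit l,
    (periodic_gcdProduct n w x).sum_Icc_one_mul_of_coprime (periodic_gcdProduct n w y) hxy,
    Nat.cast_mul]
  ring

theorem gcdProductMean_of_dvd {m : ℕ} (h : ∀ j, n j ∣ m) :
    gcdProductMean n w m = (1 / m) * ∑ l ∈ Icc 1 m, (∏ j, (Nat.gcd l (n j) : ℚ)) ^ w := by
  simp only [gcdProductMean, Nat.gcd_eq_right (h _)]

theorem gcdProductMean_prime_pow {p ν : ℕ} (hp : p.Prime) (hn : ∀ j, n j ≠ 0)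
    (hν : ∀ j, (n j).factorization p ≤ ν) :
    gcdProductMean n w (p ^ ν) = (1 / (p : ℚ) ^ ν) *
      ∑ l ∈ Icc 1 (p ^ ν), (∏ j, (Nat.gcd l (p ^ (n j).factorization p) : ℚ)) ^ w := by
  simp only [gcdProductMean, Nat.gcd_prime_pow_of_factorization_le hp (hn _) (hν _),
    Nat.cast_pow]

end GcdProductMean

theorem stmt_19 (k : ℕ) (n : Fin k → ℕ) (hn : ∀ j, 0 < n j) (w : ℕ)
    (L : ℕ) (hL : L = Finset.univ.lcm n) :
    (1 / (L : ℚ)) * ∑ l ∈ Finset.Icc 1 L, (∏ j, (Nat.gcd l (n j) : ℚ)) ^ w =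
      ∏ p ∈ L.primeFactors,
        (1 / ((p : ℚ) ^ (Finset.univ.sup fun j => (n j).factorization p))) *
          ∑ l ∈ Finset.Icc 1 (p ^ (Finset.univ.sup fun j => (n j).factorization p)),
            (∏ j, (Nat.gcd l (p ^ (n j).factorization p) : ℚ)) ^ w := by
  have hn0 : ∀ j, n j ≠ 0 := fun j => (hn j).ne'
  have hL0 : L ≠ 0 := hL ▸ lcm_ne_zero_iff.mpr fun j _ => hn0 j
  rw [← gcdProductMean_of_dvd n w fun j => hL ▸ dvd_lcm (mem_univ j),
    Nat.multiplicative_factorization _ (fun _ _ => gcdProductMean_mul n w)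
      (gcdProductMean_one n w) hL0, Finsupp.prod, Nat.support_factorization]
  refine prod_congr rfl fun p hp => ?_
  rw [hL, factorization_lcm fun j _ => hn0 j]
  exact gcdProductMean_prime_pow n w (Nat.prime_of_mem_primeFactors hp) hn0
    fun j => le_sup (f := fun j => (n j).factorization p) (mem_univ j)
end
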